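/- Let α > 0, Δ > 0, j ∈ ℕ, λ ≥ 0 and μ, σ ∈ ℝ. Let ξ be a real random variable with E[ξ²] < ∞ and characteristic function φ, and set K₁(u) = ∫_{jΔ}^{(j+1)Δ} φ( u e^{−α((j+1)Δ − s)} ) ds, K₂(u) = ∫_0^{jΔ} φ( u (e^{−αΔ} − 1) e^{−α(jΔ − s)} ) ds, E_{j,k}(α) = (1 − e^{−kαΔ}) + (−1)^k (1 − e^{−αΔ})^k (1 − e^{−kαjΔ}), and T₁(u) = −λ(j+1)Δ + i μ e^{−αjΔ}(1 − e^{−αΔ}) u − (σ²/(4α)) E_{j,2}(α) u² + λ ( K₁(u) + K₂(u) ). If X is a real random variable with E[X²] < ∞ whose characteristic function is exp(T₁(u)), then, writing m = μ e^{−αjΔ}(1 − e^{−αΔ}) + (λ/α) E[ξ] E_{j,1}(α), one has E[X²] = (λ E[ξ²] + σ²) E_{j,2}(α)/(2α) + m²; equivalently Var(X) = (λ E[ξ²] + σ²) E_{j,2}(α)/(2α). -/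

import Mathlib

/-!
Since `E[e^{iuX}] = e^{T₁(u)}` with `T₁(0) = 0`, differentiating twice at `0` shows that the mean
and the variance of `X` are `T₁'(0)/i` and `-T₁''(0)`. As `ξ` has a second moment, its
characteristic function `φ` is `C²` with `φ'(0) = i E[ξ]` and `φ''(0) = -E[ξ²]`, so
`K(u) = ∫ φ(u c(s)) ds` may be differentiated under the integral sign:
`K'(0) = i E[ξ] ∫ c` and `K''(0) = -E[ξ²] ∫ c²`. For the two exponential kernels `c₁`, `c₂` of
`K₁` and `K₂` one has `∫ c₁ᵏ + ∫ c₂ᵏ = E_{j,k}(α) / (kα)`.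
-/

open MeasureTheory ProbabilityTheory Complex

section CharFun

variable {Ω : Type*} [MeasurableSpace Ω] {P : Measure Ω} {Y : Ω → ℝ}

lemma integral_cexp_I_mul_eq_charFun_map (hY : Measurable Y) (u : ℝ) :
    ∫ ω, cexp (I * u * Y ω) ∂P = charFun (P.map Y) u := by
  rw [charFun_apply_real, integral_map hY.aemeasurable (by fun_prop)]
  simp_rw [mul_comm I, mul_right_comm]

lemma memLp_id_map_two (hY : Measurable Y) (hY2 : Integrable (fun ω => Y ω ^ 2) P) :
    MemLp id 2 (P.map Y) :=
  (memLp_map_measure_iff aestronglyMeasurable_id hY.aemeasurable).2 <|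
    (memLp_two_iff_integrable_sq hY.aestronglyMeasurable).2 hY2

variable [IsFiniteMeasure P]

lemma deriv_charFun_map_zero (hY : Measurable Y) (hY2 : Integrable (fun ω => Y ω ^ 2) P) :
    deriv (charFun (P.map Y)) 0 = I * ∫ ω, Y ω ∂P := by
  have h := iteratedDeriv_charFun_zero (n := 1)
    ((memLp_id_map_two hY hY2).mono_exponent (by norm_num))
  rw [iteratedDeriv_one, integral_map hY.aemeasurable (by fun_prop)] at h
  simpa using h

lemma iteratedDeriv_two_charFun_map_zero (hY : Measurable Y)
    (hY2 : Integrable (fun ω => Y ω ^ 2) P) :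
    iteratedDeriv 2 (charFun (P.map Y)) 0 = -∫ ω, Y ω ^ 2 ∂P := by
  have h := iteratedDeriv_charFun_zero (n := 2) (memLp_id_map_two hY hY2)
  rw [integral_map hY.aemeasurable (by fun_prop)] at h
  simpa [integral_ofReal] using h

theorem integral_and_integral_sq_of_charFun_eq_cexp (hY : Measurable Y)
    (hY2 : Integrable (fun ω => Y ω ^ 2) P) {T : ℝ → ℂ} {m v : ℝ}
    (hchar : ∀ u : ℝ, ∫ ω, cexp (I * u * Y ω) ∂P = cexp (T u))
    (hT : Differentiable ℝ T) (hT0 : T 0 = 0) (hT'0 : deriv T 0 = I * m)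
    (hT' : HasDerivAt (deriv T) (-v) 0) :
    ∫ ω, Y ω ∂P = m ∧ ∫ ω, Y ω ^ 2 ∂P = v + m ^ 2 := by
  have hchar' : charFun (P.map Y) = fun u => cexp (T u) :=
    funext fun u => (integral_cexp_I_mul_eq_charFun_map hY u).symm.trans (hchar u)
  have hderiv : deriv (charFun (P.map Y)) = fun u => cexp (T u) * deriv T u := by
    rw [hchar']
    exact funext fun u => (hT u).hasDerivAt.cexp.deriv
  have hmean := deriv_charFun_map_zero hY hY2
  have hsecond := iteratedDeriv_two_charFun_map_zero hY hY2
  rw [congrFun hderiv 0, hT0, hT'0, Complex.exp_zero, one_mul] at hmean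
  have hderiv2 : HasDerivAt (fun u => cexp (T u) * deriv T u)
      (cexp (T 0) * deriv T 0 * deriv T 0 + cexp (T 0) * -v) 0 :=
    (hT 0).hasDerivAt.cexp.mul hT'
  rw [iteratedDeriv_succ, iteratedDeriv_one, hderiv, hderiv2.deriv, hT0, hT'0,
    Complex.exp_zero] at hsecond
  constructor
  · exact_mod_cast (mul_left_cancel₀ I_ne_zero hmean).symm
  · have h : ((∫ ω, Y ω ^ 2 ∂P : ℝ) : ℂ) = ((v + m ^ 2 : ℝ) : ℂ) := by
      push_cast
      linear_combination hsecond - m ^ 2 * I_sq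
    exact_mod_cast h

end CharFun

section ParametricIntegral

variable {E : Type*} [NormedAddCommGroup E] [NormedSpace ℝ E] {ψ : ℝ → E} {c : ℝ → ℝ}

theorem hasDerivAt_intervalIntegral_smul_comp_mul (hψ : ContDiff ℝ 1 ψ) {w : ℝ → ℝ}
    (hw : Continuous w) (hc : Continuous c) (a b u₀ : ℝ) :
    HasDerivAt (fun u => ∫ s in a..b, w s • ψ (u * c s))
      (∫ s in a..b, (w s * c s) • deriv ψ (u₀ * c s)) u₀ := by
  have hψ' : Continuous (deriv ψ) := hψ.continuous_deriv le_rfl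
  obtain ⟨C, hC⟩ :=
    (isCompact_closedBall u₀ 1 |>.prod isCompact_uIcc).exists_bound_of_continuousOn
      (f := fun p : ℝ × ℝ => (w p.2 * c p.2) • deriv ψ (p.1 * c p.2)) (by fun_prop)
  have hψc : Continuous ψ := hψ.continuous
  refine (intervalIntegral.hasDerivAt_integral_of_dominated_loc_of_deriv_le (μ := volume)
    (F := fun u s => w s • ψ (u * c s)) (F' := fun u s => (w s * c s) • deriv ψ (u * c s))
    (bound := fun _ => C) (Metric.ball_mem_nhds u₀ one_pos)
    (.of_forall fun u => by fun_prop) (Continuous.intervalIntegrable (by fun_prop) _ _)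
    (by fun_prop)
    (.of_forall fun s hs u hu => ?_) intervalIntegrable_const
    (.of_forall fun s _ u _ => ?_)).2
  · exact hC (u, s) ⟨Metric.ball_subset_closedBall hu, Set.uIoc_subset_uIcc hs⟩
  · have h := ((hψ.differentiable one_ne_zero (u * c s)).hasDerivAt.scomp u
      ((hasDerivAt_id' u).mul_const (c s))).const_smul (w s)
    rw [one_mul, ← mul_smul] at h
    exact h

end ParametricIntegral

theorem integral_exp_neg_mul_sub {r : ℝ} (hr : r ≠ 0) (a b : ℝ) :
    ∫ s in a..b, Real.exp (-r * (b - s)) = (1 - Real.exp (-r * (b - a))) / r := by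
  have hderiv (s : ℝ) :
      HasDerivAt (fun t => Real.exp (-r * (b - t)) / r) (Real.exp (-r * (b - s))) s := by
    have h := ((((hasDerivAt_id' s).const_sub b).const_mul (-r)).exp).div_const r
    exact h.congr_deriv (by field_simp)
  rw [intervalIntegral.integral_eq_sub_of_hasDerivAt (fun s _ => hderiv s)
    (Continuous.intervalIntegrable (by fun_prop) _ _)]
  simp [sub_div]

section JumpExponent

variable (α Δ : ℝ) (j : ℕ)

/-- `E_{j,k}(α)`. -/
noncomputable def meanReversionFactor (k : ℕ) : ℝ :=
  (1 - Real.exp (-(k : ℝ) * α * Δ))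
    + (-1 : ℝ) ^ k * (1 - Real.exp (-α * Δ)) ^ k * (1 - Real.exp (-(k : ℝ) * α * (j : ℝ) * Δ))

noncomputable def currentJumpKernel (s : ℝ) : ℝ := Real.exp (-α * (((j : ℝ) + 1) * Δ - s))

noncomputable def pastJumpKernel (s : ℝ) : ℝ :=
  (Real.exp (-α * Δ) - 1) * Real.exp (-α * ((j : ℝ) * Δ - s))

/-- `K₁(u) + K₂(u)`, with `ψ` in place of `φ`. -/
noncomputable def jumpExponent (ψ : ℝ → ℂ) (u : ℝ) : ℂ :=
  (∫ s in (j : ℝ) * Δ..((j : ℝ) + 1) * Δ, ψ (u * currentJumpKernel α Δ j s))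
    + ∫ s in (0 : ℝ)..(j : ℝ) * Δ, ψ (u * pastJumpKernel α Δ j s)

/-- `T₁(u)`. -/
noncomputable def logReturnExponent (μ σ lam : ℝ) (ψ : ℝ → ℂ) (u : ℝ) : ℂ :=
  -((lam * ((j : ℝ) + 1) * Δ : ℝ) : ℂ)
    + I * ((μ * Real.exp (-α * (j : ℝ) * Δ) * (1 - Real.exp (-α * Δ)) : ℝ) : ℂ) * (u : ℂ)
    - ((σ ^ 2 / (4 * α) * meanReversionFactor α Δ j 2 : ℝ) : ℂ) * (u : ℂ) ^ 2
    + ((lam : ℝ) : ℂ) * jumpExponent α Δ j ψ u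

theorem continuous_currentJumpKernel : Continuous (currentJumpKernel α Δ j) := by
  unfold currentJumpKernel; fun_prop

theorem continuous_pastJumpKernel : Continuous (pastJumpKernel α Δ j) := by
  unfold pastJumpKernel; fun_prop

variable {α}

theorem integral_jumpKernels_pow (hα : α ≠ 0) {k : ℕ} (hk : k ≠ 0) :
    (∫ s in (j : ℝ) * Δ..((j : ℝ) + 1) * Δ, currentJumpKernel α Δ j s ^ k)
      + ∫ s in (0 : ℝ)..(j : ℝ) * Δ, pastJumpKernel α Δ j s ^ k
    = meanReversionFactor α Δ j k / (k * α) := by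
  have hkα : (k : ℝ) * α ≠ 0 := mul_ne_zero (Nat.cast_ne_zero.2 hk) hα
  have hpow (b s : ℝ) : Real.exp (-α * (b - s)) ^ k = Real.exp (-(k * α) * (b - s)) := by
    rw [← Real.exp_nat_mul]; ring_nf
  simp_rw [currentJumpKernel, pastJumpKernel, mul_pow, hpow, intervalIntegral.integral_const_mul,
    integral_exp_neg_mul_sub hkα]
  rw [meanReversionFactor, show Real.exp (-α * Δ) - 1 = -1 * (1 - Real.exp (-α * Δ)) by ring,
    mul_pow]
  field_simp
  ring_nf

variable {ψ : ℝ → ℂ}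

theorem jumpExponent_zero : jumpExponent α Δ j ψ 0 = (((j : ℝ) + 1) * Δ) • ψ 0 := by
  simp only [jumpExponent, zero_mul, intervalIntegral.integral_const, ← add_smul]
  ring_nf

theorem hasDerivAt_jumpExponent (hψ : ContDiff ℝ 1 ψ) (u : ℝ) :
    HasDerivAt (jumpExponent α Δ j ψ)
      ((∫ s in (j : ℝ) * Δ..((j : ℝ) + 1) * Δ,
          currentJumpKernel α Δ j s • deriv ψ (u * currentJumpKernel α Δ j s))
        + ∫ s in (0 : ℝ)..(j : ℝ) * Δ,
          pastJumpKernel α Δ j s • deriv ψ (u * pastJumpKernel α Δ j s)) u := by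
  have h (c : ℝ → ℝ) (hc : Continuous c) (a b : ℝ) := by
    simpa using hasDerivAt_intervalIntegral_smul_comp_mul hψ continuous_const hc a b u (w := 1)
  exact (h _ (continuous_currentJumpKernel α Δ j) _ _).add
    (h _ (continuous_pastJumpKernel α Δ j) _ _)

theorem deriv_jumpExponent_zero (hα : α ≠ 0) (hψ : ContDiff ℝ 1 ψ) :
    deriv (jumpExponent α Δ j ψ) 0 = (meanReversionFactor α Δ j 1 / α) • deriv ψ 0 := by
  have h := integral_jumpKernels_pow Δ j hα one_ne_zero
  simp only [pow_one, Nat.cast_one, one_mul] at h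
  rw [(hasDerivAt_jumpExponent Δ j hψ 0).deriv]
  simp only [zero_mul, intervalIntegral.integral_smul_const, ← add_smul, h]

theorem hasDerivAt_deriv_jumpExponent_zero (hα : α ≠ 0) (hψ : ContDiff ℝ 2 ψ) :
    HasDerivAt (deriv (jumpExponent α Δ j ψ))
      ((meanReversionFactor α Δ j 2 / (2 * α)) • iteratedDeriv 2 ψ 0) 0 := by
  have h (c : ℝ → ℝ) (hc : Continuous c) (a b : ℝ) :=
    hasDerivAt_intervalIntegral_smul_comp_mul hψ.deriv' hc hc a b 0
  rw [funext fun u =>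
    (hasDerivAt_jumpExponent (α := α) Δ j (hψ.of_le one_le_two) u).deriv]
  refine ((h _ (continuous_currentJumpKernel α Δ j) ((j : ℝ) * Δ) (((j : ℝ) + 1) * Δ)).add
    (h _ (continuous_pastJumpKernel α Δ j) 0 ((j : ℝ) * Δ))).congr_deriv ?_
  simp only [zero_mul, intervalIntegral.integral_smul_const, ← add_smul, ← sq,
    iteratedDeriv_succ, iteratedDeriv_zero, integral_jumpKernels_pow Δ j hα two_ne_zero,
    Nat.cast_ofNat]

variable (μ σ lam : ℝ)

theorem logReturnExponent_zero (hψ : ψ 0 = 1) : logReturnExponent α Δ j μ σ lam ψ 0 = 0 := by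
  simp only [logReturnExponent, jumpExponent_zero, hψ, real_smul, mul_one]
  push_cast
  ring

theorem hasDerivAt_logReturnExponent (hψ : ContDiff ℝ 1 ψ) (u : ℝ) :
    HasDerivAt (logReturnExponent α Δ j μ σ lam ψ)
      (I * ((μ * Real.exp (-α * (j : ℝ) * Δ) * (1 - Real.exp (-α * Δ)) : ℝ) : ℂ)
        - ((σ ^ 2 / (2 * α) * meanReversionFactor α Δ j 2 : ℝ) : ℂ) * u
        + lam * deriv (jumpExponent α Δ j ψ) u) u := by
  have hu : HasDerivAt (fun u : ℝ => (u : ℂ)) 1 u := (hasDerivAt_id u).ofReal_comp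
  refine ((((hasDerivAt_const u _).add (hu.const_mul _)).sub ((hu.pow 2).const_mul _)).add
    ((hasDerivAt_jumpExponent Δ j hψ u).differentiableAt.hasDerivAt.const_mul _)).congr_deriv
    ?_
  push_cast
  ring

theorem deriv_logReturnExponent_zero (hα : α ≠ 0) (hψ : ContDiff ℝ 1 ψ) :
    deriv (logReturnExponent α Δ j μ σ lam ψ) 0
      = I * ((μ * Real.exp (-α * (j : ℝ) * Δ) * (1 - Real.exp (-α * Δ)) : ℝ) : ℂ)
        + lam * (meanReversionFactor α Δ j 1 / α) • deriv ψ 0 := by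
  rw [(hasDerivAt_logReturnExponent Δ j μ σ lam hψ 0).deriv, deriv_jumpExponent_zero Δ j hα hψ]
  simp

theorem hasDerivAt_deriv_logReturnExponent_zero (hα : α ≠ 0) (hψ : ContDiff ℝ 2 ψ) :
    HasDerivAt (deriv (logReturnExponent α Δ j μ σ lam ψ))
      (-((σ ^ 2 / (2 * α) * meanReversionFactor α Δ j 2 : ℝ) : ℂ)
        + lam * (meanReversionFactor α Δ j 2 / (2 * α)) • iteratedDeriv 2 ψ 0) 0 := by
  rw [funext fun u =>
    (hasDerivAt_logReturnExponent (α := α) Δ j μ σ lam (hψ.of_le one_le_two) u).deriv]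
  refine (((hasDerivAt_const _ _).sub
    (((hasDerivAt_id (0 : ℝ)).ofReal_comp).const_mul _)).add
    ((hasDerivAt_deriv_jumpExponent_zero Δ j hα hψ).const_mul _)).congr_deriv ?_
  simp

end JumpExponent

theorem logReturn_second_moment_general {Ω Ωx : Type*} [MeasurableSpace Ω] [MeasurableSpace Ωx]
    (P : Measure Ω) (Px : Measure Ωx)
    [IsProbabilityMeasure P] [IsProbabilityMeasure Px]
    (α Δ lam μ σ : ℝ) (j : ℕ) (hα : 0 < α)
    (ξ : Ω → ℝ) (hξmeas : Measurable ξ)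
    (φ : ℝ → ℂ)
    (hφ : ∀ u : ℝ, φ u = ∫ ω, Complex.exp (Complex.I * (u : ℂ) * (ξ ω : ℂ)) ∂P)
    (K₁ K₂ : ℝ → ℂ)
    (hK₁ : ∀ u : ℝ, K₁ u =
      ∫ s in ((j : ℝ) * Δ)..(((j : ℝ) + 1) * Δ), φ (u * Real.exp (-α * (((j : ℝ) + 1) * Δ - s))))
    (hK₂ : ∀ u : ℝ, K₂ u =
      ∫ s in (0:ℝ)..((j : ℝ) * Δ),
        φ (u * (Real.exp (-α * Δ) - 1) * Real.exp (-α * ((j : ℝ) * Δ - s))))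
    (E : ℕ → ℝ)
    (hE : ∀ k : ℕ, E k = (1 - Real.exp (-(k : ℝ) * α * Δ))
        + (-1 : ℝ) ^ k * (1 - Real.exp (-α * Δ)) ^ k * (1 - Real.exp (-(k : ℝ) * α * (j : ℝ) * Δ)))
    (T₁ : ℝ → ℂ)
    (hT₁ : ∀ u : ℝ, T₁ u = -((lam * ((j : ℝ) + 1) * Δ : ℝ) : ℂ)
        + Complex.I * ((μ * Real.exp (-α * (j : ℝ) * Δ) * (1 - Real.exp (-α * Δ)) : ℝ) : ℂ) * (u : ℂ)
        - ((σ ^ 2 / (4 * α) * E 2 : ℝ) : ℂ) * (u : ℂ) ^ 2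
        + ((lam : ℝ) : ℂ) * (K₁ u + K₂ u))
    (X : Ωx → ℝ) (hXmeas : Measurable X)
    (hchar : ∀ u : ℝ, ∫ ω, Complex.exp (Complex.I * (u : ℂ) * (X ω : ℂ)) ∂Px = Complex.exp (T₁ u))
    (hξint : Integrable (fun ω => ξ ω ^ 2) P) (hXint : Integrable (fun ω => X ω ^ 2) Px)
    (m v : ℝ)
    (hm : m = μ * Real.exp (-α * (j : ℝ) * Δ) * (1 - Real.exp (-α * Δ))
        + lam / α * (∫ ω, ξ ω ∂P) * E 1)
    (hv : v = (lam * (∫ ω, ξ ω ^ 2 ∂P) + σ ^ 2) * E 2 / (2 * α)) :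
    (∫ ω, X ω ^ 2 ∂Px = v + m ^ 2) ∧ ProbabilityTheory.variance X Px = v := by
  have hφ_eq : φ = charFun (P.map ξ) :=
    funext fun u => (hφ u).trans (integral_cexp_I_mul_eq_charFun_map hξmeas u)
  have hφ2 : ContDiff ℝ 2 φ := hφ_eq ▸ contDiff_charFun (memLp_id_map_two hξmeas hξint)
  obtain rfl : E = meanReversionFactor α Δ j := funext hE
  obtain rfl : T₁ = logReturnExponent α Δ j μ σ lam φ := funext fun u => by
    simp only [hT₁, hK₁, hK₂, logReturnExponent, jumpExponent, currentJumpKernel, pastJumpKernel,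
      mul_assoc]
  have hφ1 : ContDiff ℝ 1 φ := hφ2.of_le one_le_two
  have hT'0 : deriv (logReturnExponent α Δ j μ σ lam φ) 0 = I * m := by
    rw [deriv_logReturnExponent_zero Δ j μ σ lam hα.ne' hφ1, hφ_eq,
      deriv_charFun_map_zero hξmeas hξint, hm, real_smul]
    push_cast
    field_simp
  have hT'' : HasDerivAt (deriv (logReturnExponent α Δ j μ σ lam φ)) (-v) 0 := by
    refine (hasDerivAt_deriv_logReturnExponent_zero Δ j μ σ lam hα.ne' hφ2).congr_deriv ?_
    rw [hφ_eq, iteratedDeriv_two_charFun_map_zero hξmeas hξint, hv, real_smul]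
    push_cast
    field_simp
    ring
  obtain ⟨hmean, hsq⟩ := integral_and_integral_sq_of_charFun_eq_cexp hXmeas hXint hchar
    (fun u => (hasDerivAt_logReturnExponent Δ j μ σ lam hφ1 u).differentiableAt)
    (logReturnExponent_zero Δ j μ σ lam (by simp [hφ])) hT'0 hT''
  refine ⟨hsq, ?_⟩
  rw [variance_eq_sub ((memLp_two_iff_integrable_sq hXmeas.aestronglyMeasurable).2 hXint)]
  simp only [Pi.pow_apply, hsq, hmean]
  ring

/-- Second moment and variance of the log-return of the mean-reverting
jump-diffusion model. -/
theorem logReturn_second_moment {Ω Ωx : Type*} [MeasurableSpace Ω] [MeasurableSpace Ωx]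
    (P : Measure Ω) (Px : Measure Ωx)
    [IsProbabilityMeasure P] [IsProbabilityMeasure Px]
    (α Δ lam μ σ : ℝ) (j : ℕ) (hα : 0 < α) (hΔ : 0 < Δ) (hlam : 0 ≤ lam)
    (ξ : Ω → ℝ) (hξmeas : Measurable ξ)
    (φ : ℝ → ℂ)
    (hφ : ∀ u : ℝ, φ u = ∫ ω, Complex.exp (Complex.I * (u : ℂ) * (ξ ω : ℂ)) ∂P)
    (K₁ K₂ : ℝ → ℂ)
    (hK₁ : ∀ u : ℝ, K₁ u =
      ∫ s in ((j : ℝ) * Δ)..(((j : ℝ) + 1) * Δ), φ (u * Real.exp (-α * (((j : ℝ) + 1) * Δ - s))))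
    (hK₂ : ∀ u : ℝ, K₂ u =
      ∫ s in (0:ℝ)..((j : ℝ) * Δ),
        φ (u * (Real.exp (-α * Δ) - 1) * Real.exp (-α * ((j : ℝ) * Δ - s))))
    (E : ℕ → ℝ)
    (hE : ∀ k : ℕ, E k = (1 - Real.exp (-(k : ℝ) * α * Δ))
        + (-1 : ℝ) ^ k * (1 - Real.exp (-α * Δ)) ^ k * (1 - Real.exp (-(k : ℝ) * α * (j : ℝ) * Δ)))
    (T₁ : ℝ → ℂ)
    (hT₁ : ∀ u : ℝ, T₁ u = -((lam * ((j : ℝ) + 1) * Δ : ℝ) : ℂ)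
        + Complex.I * ((μ * Real.exp (-α * (j : ℝ) * Δ) * (1 - Real.exp (-α * Δ)) : ℝ) : ℂ) * (u : ℂ)
        - ((σ ^ 2 / (4 * α) * E 2 : ℝ) : ℂ) * (u : ℂ) ^ 2
        + ((lam : ℝ) : ℂ) * (K₁ u + K₂ u))
    (X : Ωx → ℝ) (hXmeas : Measurable X)
    (hchar : ∀ u : ℝ, ∫ ω, Complex.exp (Complex.I * (u : ℂ) * (X ω : ℂ)) ∂Px = Complex.exp (T₁ u))
    (hξint : Integrable (fun ω => ξ ω ^ 2) P) (hXint : Integrable (fun ω => X ω ^ 2) Px)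
    (m v : ℝ)
    (hm : m = μ * Real.exp (-α * (j : ℝ) * Δ) * (1 - Real.exp (-α * Δ))
        + lam / α * (∫ ω, ξ ω ∂P) * E 1)
    (hv : v = (lam * (∫ ω, ξ ω ^ 2 ∂P) + σ ^ 2) * E 2 / (2 * α)) :
    (∫ ω, X ω ^ 2 ∂Px = v + m ^ 2) ∧ ProbabilityTheory.variance X Px = v :=
  logReturn_second_moment_general P Px α Δ lam μ σ j hα ξ hξmeas φ hφ K₁ K₂ hK₁ hK₂ E hE T₁ hT₁ X
    hXmeas hchar hξint hXint m v hm hv
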